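/- arXiv:0902.3152 — 3 statements merged into one kernel-verified Lean document; each statement's English description precedes it below -/
import Mathlib

section
/- Let Γ be a group generated by a finite set S with Kazhdan constant ε > 0 with respect to S (i.e., every unitary representation of Γ without nonzero invariant vectors has no unit vector v with ∑_{s∈S} ‖ρ(s)v − v‖²/|S| ≤ ε). Let 0 < δ < ε. If (ρ, H) is a unitary representation of Γ with a unit vector v satisfying (1/|S|)∑_{s∈S} ‖ρ(s)v − v‖² ≤ δ, then there exists a Γ-invariant vector v₀ ∈ H with ‖v − v₀‖² < δ/ε. -/
/-
Split `v = v₀ + w` with `v₀` the orthogonal projection onto the closed subspace of invariant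
vectors. Its orthogonal complement is a subrepresentation without nonzero invariant vectors, and
`ρ(s)w - w = ρ(s)v - v`, so the Kazhdan inequality applied to `w / ‖w‖` gives `ε ‖w‖² < δ`.
-/

/-- A unitary representation of a (discrete) group `G` on a complex Hilbert space. -/
structure UnitaryRep (G : Type) [Group G] where
  carrier : Type
  [ng : NormedAddCommGroup carrier]
  [ips : InnerProductSpace ℂ carrier]
  [cs : CompleteSpace carrier]
  ρ : G →* (carrier ≃ₗᵢ[ℂ] carrier)

attribute [instance] UnitaryRep.ng UnitaryRep.ips UnitaryRep.cs

/-- A representation has no nonzero invariant vectors. -/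
def UnitaryRep.NoInvariantVectors {G : Type} [Group G] (π : UnitaryRep G) : Prop :=
  ∀ v : π.carrier, (∀ g : G, π.ρ g v = v) → v = 0

namespace UnitaryRep

variable {G : Type} [Group G] (π : UnitaryRep G)

lemma ρ_apply_inv_apply (g : G) (v : π.carrier) : π.ρ g (π.ρ g⁻¹ v) = v := by
  simp [map_inv, LinearIsometryEquiv.inv_def]

def invariants : Submodule ℂ π.carrier where
  carrier := {v | ∀ g, π.ρ g v = v}
  add_mem' ha hb g := by simp [ha g, hb g]
  zero_mem' _ := map_zero _
  smul_mem' c _ ha g := by simp [ha g]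

@[simp] lemma mem_invariants {v : π.carrier} : v ∈ π.invariants ↔ ∀ g, π.ρ g v = v := Iff.rfl

lemma isClosed_invariants : IsClosed (π.invariants : Set π.carrier) := by
  convert isClosed_iInter fun g => isClosed_eq (π.ρ g).continuous continuous_id
  ext; simp [invariants]

lemma map_mem_orthogonal_invariants (g : G) {w : π.carrier} (hw : w ∈ π.invariantsᗮ) :
    π.ρ g w ∈ π.invariantsᗮ := by
  intro u hu
  rw [← hu g, LinearIsometryEquiv.inner_map_map]
  exact hw u hu

variable {π} in
lemma map_eq_of_forall_map_mem {K : Submodule ℂ π.carrier} (hK : ∀ g, ∀ v ∈ K, π.ρ g v ∈ K)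
    (g : G) : K.map (π.ρ g).toLinearEquiv.toLinearMap = K :=
  le_antisymm (Submodule.map_le_iff_le_comap.2 fun v hv => hK g v hv)
    fun v hv => ⟨π.ρ g⁻¹ v, hK _ _ hv, π.ρ_apply_inv_apply g v⟩

noncomputable def subrep (K : Submodule ℂ π.carrier) [CompleteSpace K]
    (hK : ∀ g, ∀ v ∈ K, π.ρ g v ∈ K) : UnitaryRep G where
  carrier := K
  ρ :=
    { toFun g :=
        { toLinearEquiv := (π.ρ g).toLinearEquiv.ofSubmodules K K (map_eq_of_forall_map_mem hK g)
          norm_map' w := (π.ρ g).norm_map w }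
      map_one' := by ext; simp
      map_mul' g h := by ext; simp; rfl }

lemma noInvariantVectors_subrep_orthogonal_invariants :
    (π.subrep π.invariantsᗮ fun g _ => π.map_mem_orthogonal_invariants g).NoInvariantVectors :=
  fun w hw => Subtype.ext <| inner_self_eq_zero.mp <| w.2 w.1 fun g => congrArg Subtype.val (hw g)

noncomputable def avgDisplacement (S : Finset G) (v : π.carrier) : ℝ :=
  (1 / (S.card : ℝ)) * ∑ s ∈ S, ‖π.ρ s v - v‖ ^ 2

variable (S : Finset G)

lemma avgDisplacement_smul (c : ℂ) (v : π.carrier) :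
    π.avgDisplacement S (c • v) = ‖c‖ ^ 2 * π.avgDisplacement S v := by
  simp only [avgDisplacement, map_smul, ← smul_sub, norm_smul, mul_pow, ← Finset.mul_sum]
  ring

lemma avgDisplacement_sub_of_mem_invariants (v : π.carrier) {v₀ : π.carrier}
    (hv₀ : v₀ ∈ π.invariants) : π.avgDisplacement S (v - v₀) = π.avgDisplacement S v := by
  simp only [avgDisplacement, map_sub, (π.mem_invariants).1 hv₀, sub_sub_sub_cancel_right]

lemma avgDisplacement_subrep (K : Submodule ℂ π.carrier) [CompleteSpace K]
    (hK : ∀ g, ∀ v ∈ K, π.ρ g v ∈ K) (w : K) :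
    (π.subrep K hK).avgDisplacement S w = π.avgDisplacement S w :=
  rfl

variable {π S} in
lemma norm_sq_mul_lt_avgDisplacement {ε : ℝ}
    (hKaz : ∀ v : π.carrier, ‖v‖ = 1 → ε < π.avgDisplacement S v) {w : π.carrier} (hw : w ≠ 0) :
    ‖w‖ ^ 2 * ε < π.avgDisplacement S w := by
  have hw' : 0 < ‖w‖ := norm_pos_iff.2 hw
  have := hKaz ((‖w‖⁻¹ : ℂ) • w) (by simp [norm_smul, hw'.ne'])
  rwa [avgDisplacement_smul, norm_inv, Complex.norm_real, norm_norm, inv_pow,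
    lt_inv_mul_iff₀ (by positivity)] at this

end UnitaryRep

theorem almost_invariant_close_to_invariant_general (G : Type) [Group G] (S : Finset G)
    (ε δ : ℝ) (hε : 0 < ε) (hδ : 0 < δ)
    (hKaz : ∀ π : UnitaryRep G, π.NoInvariantVectors →
      ∀ v : π.carrier, ‖v‖ = 1 → ε < (1 / (S.card : ℝ)) * ∑ s ∈ S, ‖π.ρ s v - v‖ ^ 2)
    (π : UnitaryRep G) (v : π.carrier)
    (hinv : (1 / (S.card : ℝ)) * ∑ s ∈ S, ‖π.ρ s v - v‖ ^ 2 ≤ δ) :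
    ∃ v₀ : π.carrier, (∀ g : G, π.ρ g v₀ = v₀) ∧ ‖v - v₀‖ ^ 2 < δ / ε := by
  have : CompleteSpace π.invariants := π.isClosed_invariants.completeSpace_coe
  set v₀ := π.invariants.starProjection v
  have hv₀ : v₀ ∈ π.invariants := π.invariants.starProjection_apply_mem v
  refine ⟨v₀, hv₀, ?_⟩
  rcases eq_or_ne (v - v₀) 0 with h0 | h0
  · rw [h0, norm_zero, zero_pow two_ne_zero]
    positivity
  rw [lt_div_iff₀ hε]
  calc ‖v - v₀‖ ^ 2 * ε
      < _ := UnitaryRep.norm_sq_mul_lt_avgDisplacement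
        (w := ⟨v - v₀, π.invariants.sub_starProjection_mem_orthogonal v⟩)
        (hKaz _ π.noInvariantVectors_subrep_orthogonal_invariants) (mt (congrArg Subtype.val) h0)
    _ = π.avgDisplacement S v := by
      rw [UnitaryRep.avgDisplacement_subrep, π.avgDisplacement_sub_of_mem_invariants S v hv₀]
    _ ≤ δ := hinv

/-- Lemma 2.1: if `Γ` has average Kazhdan constant `ε` with respect to the finite
generating set `S`, `0 < δ < ε`, and a unitary representation has a unit vector `v` with
`(1/|S|) ∑_{s∈S} ‖ρ(s)v − v‖² ≤ δ`, then there is an invariant vector `v₀` with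
`‖v − v₀‖² < δ/ε`. -/
theorem almost_invariant_close_to_invariant (G : Type) [Group G] (S : Finset G)
    (hgen : Subgroup.closure (S : Set G) = ⊤) (ε δ : ℝ) (hε : 0 < ε) (hδ : 0 < δ)
    (hδε : δ < ε)
    (hKaz : ∀ π : UnitaryRep G, π.NoInvariantVectors →
      ∀ v : π.carrier, ‖v‖ = 1 → ε < (1 / (S.card : ℝ)) * ∑ s ∈ S, ‖π.ρ s v - v‖ ^ 2)
    (π : UnitaryRep G) (v : π.carrier) (hv : ‖v‖ = 1)
    (hinv : (1 / (S.card : ℝ)) * ∑ s ∈ S, ‖π.ρ s v - v‖ ^ 2 ≤ δ) :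
    ∃ v₀ : π.carrier, (∀ g : G, π.ρ g v₀ = v₀) ∧ ‖v - v₀‖ ^ 2 < δ / ε :=
  almost_invariant_close_to_invariant_general G S ε δ hε hδ hKaz π v hinv
end

section
/- Let p be a prime and n ≥ 2. There exists a non-split extension of the additive group of the group algebra 𝔽_p[C_p] by the cyclic group C_{p^n}, where C_{p^n} acts on 𝔽_p[C_p] by left translation modulo p (i.e., via the projection C_{p^n} → C_p followed by left multiplication). Equivalently, H²(C_{p^n}, 𝔽_p[C_p], θ) ≠ 0 for this action θ. -/
/-!
Let `ℤ` act on `M = 𝔽_p[C_p]` by translation through `ℤ → C_p`. In `M ⋊ ℤ` the element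
`(1, p ^ n)`, with `1` the constant function, is central; the quotient by the cyclic group it
generates is an extension of `M` by `ℤ/p^n`. A section would provide `x = (m, r)` with
`r ≡ 1 mod p ^ n` and `x ^ p ^ n ∈ ⟨(1, p ^ n)⟩`. The `M`-component of `x ^ p ^ n` is a sum of
`p ^ n` translates of `m`, that is `p ^ (n - 1)` times the sum over a full orbit, which vanishes
for `n ≥ 2`. So `x ^ p ^ n = (0, p ^ n r)`, whereas the only element of `⟨(1, p ^ n)⟩` with
`ℤ`-component `p ^ n r` is `(r, p ^ n r)`, and `r ≢ 0 mod p`.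
-/

open Finset

theorem Function.Periodic.sum_range_mul {M : Type*} [AddCommMonoid M] {f : ℕ → M} {c : ℕ}
    (hf : Function.Periodic f c) (k : ℕ) :
    ∑ i ∈ range (k * c), f i = k • ∑ i ∈ range c, f i := by
  induction k with
  | zero => simp
  | succ k ih =>
    rw [add_mul, one_mul, sum_range_add, ih, succ_nsmul]
    congr 1
    refine sum_congr rfl fun i _ => ?_
    rw [add_comm]
    exact (hf.nat_mul k) i

namespace SemidirectProduct

variable {N G : Type*} [Group G]

theorem conj_inl [CommGroup N] {φ : G →* MulAut N} (x : N ⋊[φ] G) (n : N) :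
    x * inl n * x⁻¹ = inl (φ x.right n) := by
  calc x * inl n * x⁻¹
      = inl x.left * (inr x.right * inl n * inr x.right⁻¹) * inl x.left⁻¹ := by
        conv_lhs => rw [← inl_left_mul_inr_right x]
        simp only [mul_inv_rev, map_inv, mul_assoc]
    _ = inl (φ x.right n) := by
        rw [← inl_aut, ← map_mul, ← map_mul, mul_inv_cancel_comm]

theorem right_pow [Group N] {φ : G →* MulAut N} (x : N ⋊[φ] G) (k : ℕ) :
    (x ^ k).right = x.right ^ k :=
  map_pow rightHom x k

theorem left_pow [CommGroup N] {φ : G →* MulAut N} (x : N ⋊[φ] G) (k : ℕ) :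
    (x ^ k).left = ∏ i ∈ range k, φ (x.right ^ i) x.left := by
  induction k with
  | zero => rfl
  | succ k ih => rw [pow_succ, mul_left, ih, prod_range_succ, right_pow]

end SemidirectProduct

namespace GroupAlgebraExtension

variable (p n : ℕ)

def shift : Multiplicative ℤ →* MulAut (Multiplicative (ZMod p → ZMod p)) where
  toFun k := AddEquiv.toMultiplicative
    { toFun := fun f x => f (x - k.toAdd)
      invFun := fun f x => f (x + k.toAdd)
      left_inv := fun f => by simp
      right_inv := fun f => by simp
      map_add' := fun _ _ => rfl }
  map_one' := by ext; simp
  map_mul' a b := by ext f x; simp [sub_sub]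

variable {p} in
@[simp]
theorem shift_apply (k : Multiplicative ℤ) (f : Multiplicative (ZMod p → ZMod p)) (x : ZMod p) :
    (shift p k f).toAdd x = f.toAdd (x - k.toAdd) :=
  rfl

variable {p} in
theorem shift_eq_one_of_dvd {k : Multiplicative ℤ} (hk : (p : ℤ) ∣ k.toAdd) : shift p k = 1 := by
  ext f x
  simp [(ZMod.intCast_zmod_eq_zero_iff_dvd _ p).2 hk]

abbrev Semidirect : Type := Multiplicative (ZMod p → ZMod p) ⋊[shift p] Multiplicative ℤ

def centralHom : Multiplicative ℤ →* Semidirect p where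
  toFun k := ⟨.ofAdd fun _ => (k.toAdd : ZMod p), .ofAdd (p ^ n * k.toAdd)⟩
  map_one' := by ext <;> simp [-SemidirectProduct.mk_eq_inl_mul_inr]
  map_mul' a b := by
    ext x
    · simp only [SemidirectProduct.mul_left, toAdd_mul, Pi.add_apply, shift_apply, toAdd_ofAdd,
        Int.cast_add]
    · simp only [SemidirectProduct.mul_right, toAdd_mul, toAdd_ofAdd, mul_add]

@[simp]
theorem centralHom_left (k : Multiplicative ℤ) :
    (centralHom p n k).left = .ofAdd fun _ => (k.toAdd : ZMod p) :=
  rfl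

@[simp]
theorem centralHom_right (k : Multiplicative ℤ) :
    (centralHom p n k).right = .ofAdd (p ^ n * k.toAdd) :=
  rfl

theorem left_pow_eq_one_of_sq_dvd (x : Semidirect p) {k : ℕ} (hk : p ^ 2 ∣ k) :
    (x ^ k).left = 1 := by
  obtain ⟨j, rfl⟩ := hk
  apply Multiplicative.toAdd.injective
  funext t
  have hper : Function.Periodic
      (fun i : ℕ => x.left.toAdd (t - ((i • x.right.toAdd : ℤ) : ZMod p))) p := by
    intro i
    simp
  rw [SemidirectProduct.left_pow, toAdd_prod, Finset.sum_apply]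
  simp only [shift_apply, toAdd_pow]
  rw [show p ^ 2 * j = j * p * p by ring, hper.sum_range_mul]
  simp [nsmul_eq_mul]

theorem pow_notMem_range_centralHom [NeZero p] (hn : 2 ≤ n) (x : Semidirect p)
    (hx : ((x.right.toAdd : ℤ) : ZMod p) ≠ 0) : x ^ p ^ n ∉ (centralHom p n).range := by
  rintro ⟨k, hk⟩
  have hk_eq : k.toAdd = x.right.toAdd := by
    have := congrArg (·.right.toAdd) hk
    simp only [centralHom_right, SemidirectProduct.right_pow, toAdd_pow, toAdd_ofAdd,
      nsmul_eq_mul, Nat.cast_pow] at this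
    exact mul_left_cancel₀ (pow_ne_zero _ (NeZero.ne _)) this
  have := congrFun (congrArg (·.left.toAdd) hk) 0
  simp only [centralHom_left, left_pow_eq_one_of_sq_dvd p x (pow_dvd_pow p hn), hk_eq] at this
  exact hx this

variable [NeZero n]

theorem centralHom_mem_center (k : Multiplicative ℤ) :
    centralHom p n k ∈ Subgroup.center (Semidirect p) := by
  refine Subgroup.mem_center_iff.2 fun g => ?_
  have hfix : shift p (centralHom p n k).right = 1 :=
    shift_eq_one_of_dvd (Dvd.dvd.mul_right (dvd_pow_self _ (NeZero.ne n)) _)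
  ext : 1
  · rw [SemidirectProduct.mul_left, SemidirectProduct.mul_left, hfix, MulAut.one_apply, mul_comm]
    rfl
  · exact mul_comm _ _

instance : (centralHom p n).range.Normal where
  conj_mem := by
    rintro _ ⟨k, rfl⟩ g
    rw [Subgroup.mem_center_iff.1 (centralHom_mem_center p n k) g, mul_inv_cancel_right]
    exact ⟨k, rfl⟩

abbrev Extension : Type := Semidirect p ⧸ (centralHom p n).range

def incl : Multiplicative (ZMod p → ZMod p) →* Extension p n :=
  (QuotientGroup.mk' _).comp SemidirectProduct.inl

def proj : Extension p n →* Multiplicative (ZMod (p ^ n)) :=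
  QuotientGroup.lift _ ((Int.castAddHom _).toMultiplicative.comp SemidirectProduct.rightHom) <| by
    rintro _ ⟨k, rfl⟩
    refine congrArg Multiplicative.ofAdd ((ZMod.intCast_zmod_eq_zero_iff_dvd _ _).2 ?_)
    simp

theorem proj_mk (x : Semidirect p) :
    proj p n (QuotientGroup.mk x) = .ofAdd (x.right.toAdd : ZMod (p ^ n)) :=
  rfl

theorem incl_injective [NeZero p] : Function.Injective (incl p n) := by
  refine (injective_iff_map_eq_one _).2 fun f hf => ?_
  obtain ⟨k, hk⟩ := (QuotientGroup.eq_one_iff _).1 hf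
  have hk1 : k = 1 := by
    have := congrArg (·.right.toAdd) hk
    simpa [NeZero.ne] using this
  rw [hk1, map_one] at hk
  exact SemidirectProduct.inl_injective hk.symm

theorem proj_surjective : Function.Surjective (proj p n) := fun y => by
  obtain ⟨k, hk⟩ := ZMod.intCast_surjective y.toAdd
  exact ⟨QuotientGroup.mk (SemidirectProduct.inr (.ofAdd k)), congrArg Multiplicative.ofAdd hk⟩

theorem range_incl_eq_ker_proj : (incl p n).range = (proj p n).ker := by
  refine le_antisymm ((MonoidHom.range_le_ker_iff _ _).2 (MonoidHom.ext fun f => ?_))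
    fun g hg => ?_
  · simp [incl, proj_mk]
  obtain ⟨x, rfl⟩ := QuotientGroup.mk_surjective g
  obtain ⟨k, hk⟩ : ((p ^ n : ℕ) : ℤ) ∣ x.right.toAdd :=
    (ZMod.intCast_zmod_eq_zero_iff_dvd _ _).1 (congrArg Multiplicative.toAdd hg)
  have hx : x = SemidirectProduct.inl (x.left * (centralHom p n (.ofAdd k)).left⁻¹) *
      centralHom p n (.ofAdd k) := by
    ext : 1
    · simp [SemidirectProduct.mul_left]
    · rw [SemidirectProduct.mul_right, SemidirectProduct.right_inl, one_mul, centralHom_right,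
        toAdd_ofAdd, ← Nat.cast_pow, ← hk, ofAdd_toAdd]
  refine ⟨x.left * (centralHom p n (.ofAdd k)).left⁻¹, ?_⟩
  conv_rhs =>
    rw [hx, QuotientGroup.mk_mul, (QuotientGroup.eq_one_iff _).2 (MonoidHom.mem_range.2 ⟨_, rfl⟩),
      mul_one]
  rfl

theorem conj_incl (g : Extension p n) (f : ZMod p → ZMod p) :
    g * incl p n (.ofAdd f) * g⁻¹ = incl p n (.ofAdd fun x =>
      f (x - ZMod.castHom (dvd_pow_self p (NeZero.ne n)) (ZMod p) (proj p n g).toAdd)) := by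
  obtain ⟨x, rfl⟩ := QuotientGroup.mk_surjective g
  simp only [incl, MonoidHom.comp_apply, QuotientGroup.coe_mk', ← QuotientGroup.mk_inv,
    ← QuotientGroup.mk_mul, SemidirectProduct.conj_inl, proj_mk, toAdd_ofAdd, map_intCast]
  rfl

theorem not_exists_section [Fact (1 < p)] (hn : 2 ≤ n) :
    ¬∃ s : Multiplicative (ZMod (p ^ n)) →* Extension p n,
      (proj p n).comp s = MonoidHom.id _ := by
  rintro ⟨s, hs⟩
  obtain ⟨x, hx⟩ := QuotientGroup.mk_surjective (s (.ofAdd 1))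
  have hx_right : ((x.right.toAdd : ℤ) : ZMod (p ^ n)) = 1 := by
    have := DFunLike.congr_fun hs (.ofAdd 1)
    rwa [MonoidHom.comp_apply, ← hx, proj_mk] at this
  refine pow_notMem_range_centralHom p n hn x ?_ ((QuotientGroup.eq_one_iff _).1 ?_)
  · have := congrArg (ZMod.castHom (dvd_pow_self p (NeZero.ne n)) (ZMod p)) hx_right
    rw [map_intCast, map_one] at this
    exact this ▸ one_ne_zero
  · rw [QuotientGroup.mk_pow, hx, ← map_pow, ← ofAdd_nsmul, nsmul_one, ZMod.natCast_self,
      ofAdd_zero, map_one]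

end GroupAlgebraExtension

/-- Lemma 3.4: for a prime `p` and `n ≥ 2` there is a non-split extension of the additive
group of the group algebra `𝔽_p[C_p]` (realized as functions `C_p → 𝔽_p`) by the cyclic
group `C_{p^n}`, where `C_{p^n}` acts by left translation modulo `p`. -/
theorem nonsplit_extension_of_group_algebra (p n : ℕ) [Fact p.Prime] (hn : 2 ≤ n) :
    ∃ (G : Type) (_ : Group G)
      (ι : Multiplicative (ZMod p → ZMod p) →* G)
      (π : G →* Multiplicative (ZMod (p ^ n))),
        Function.Injective ι ∧ Function.Surjective π ∧ ι.range = π.ker ∧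
        (∀ (g : G) (f : ZMod p → ZMod p),
          g * ι (Multiplicative.ofAdd f) * g⁻¹ =
            ι (Multiplicative.ofAdd (fun x : ZMod p =>
              f (x - ZMod.castHom (dvd_pow_self p (by omega : n ≠ 0)) (ZMod p)
                (Multiplicative.toAdd (π g)))))) ∧
        ¬∃ s : Multiplicative (ZMod (p ^ n)) →* G,
            π.comp s = MonoidHom.id (Multiplicative (ZMod (p ^ n))) := by
  have : NeZero n := ⟨by omega⟩
  open GroupAlgebraExtension in
  exact ⟨Extension p n, inferInstance, incl p n, proj p n, incl_injective p n,
    proj_surjective p n, range_incl_eq_ker_proj p n, conj_incl p n, not_exists_section p n hn⟩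
end

section
/- Let 0 < δ < 1/2, p a prime. Fix s independent uniform random elements h₁,…,h_s of 𝔽_p[C_p]. For fixed nonzero f with rank T_f = r, the probability that |(1/(sp)) ∑_{i=1}^s ∑_{σ∈C_p} e_p(σh_i · f)| > 1 − δ is at most 8·exp(−(1−2δ)²·r·s/4). Assuming this, the probability that there exists a nonzero f ∈ 𝔽_p[C_p] with |(1/(sp))∑_{i=1}^s∑_{σ∈C_p} e_p(σh_i·f)| > 1−δ is at most 8·∑_{r=1}^{p} p^r·exp(−(1−2δ)²rs/4), which is strictly less than 1 when s = 4c·ln(p)/(1−2δ)² for suitable c > 1 and p large enough; hence there exist h₁,…,h_s with s = O(ln p/(1−2δ)²) such that the multiset ⋃_i C_p·h_i is δ-balanced. -/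
/-- The additive character `e_p(α) = exp(2πiα/p)` of `𝔽_p`. -/
noncomputable def ep (p : ℕ) (α : ZMod p) : ℂ :=
  Complex.exp (2 * Real.pi * Complex.I * (α.val : ℂ) / (p : ℂ))

/-- The dot product `f·h = ∑_{x∈C_p} f(x)h(x)` on `𝔽_p[C_p]`. -/
def dotFp (p : ℕ) [NeZero p] (f h : ZMod p → ZMod p) : ZMod p :=
  ∑ x : ZMod p, f x * h x

/-- `rank T_f`, realized as the dimension of the span of the `C_p`-orbit of `f`. -/
noncomputable def rankTf (p : ℕ) [NeZero p] (f : ZMod p → ZMod p) : ℕ :=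
  Module.finrank (ZMod p)
    (Submodule.span (ZMod p) (Set.range fun σ : ZMod p => fun x => f (x - σ)))

/-! The generator `S` of `C_p` acts on `𝔽_p[C_p]` by translation, and `(S - 1)^p = S^p - 1 = 0`
in characteristic `p`. So `S - 1` is nilpotent on the orbit span of `f`, whose dimension is
`rank T_f = r`, and therefore `(S - 1)^r f = 0`. Since `ker (S - 1)` consists of the constants,
`ker (S - 1)^r` has dimension at most `r`: at most `p^r` functions have rank `r`. A union bound
over the nonzero `f`, grouped by rank, then gives the estimate, and when the probability of a
bad choice is below `1` some `h` is good. -/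

open Finset Module

theorem Module.End.finrank_ker_pow_le {K V : Type*} [DivisionRing K] [AddCommGroup V] [Module K V]
    [FiniteDimensional K V] (g : End K V) (n : ℕ) :
    finrank K (LinearMap.ker (g ^ n)) ≤ n * finrank K (LinearMap.ker g) := by
  induction n with
  | zero => simp [Module.End.one_eq_id]
  | succ n ih =>
    let r : LinearMap.ker (g ^ (n + 1)) →ₗ[K] LinearMap.ker (g ^ n) :=
      g.restrict fun v hv => by rwa [LinearMap.mem_ker, ← Module.End.mul_apply, ← pow_succ]
    have hker :
        LinearMap.ker r = (LinearMap.ker g).comap (LinearMap.ker (g ^ (n + 1))).subtype := by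
      ext v; simp [r, LinearMap.restrict_apply, Subtype.ext_iff]
    have hle : LinearMap.ker g ≤ LinearMap.ker (g ^ (n + 1)) := by
      rw [pow_succ]; exact LinearMap.ker_le_ker_comp g (g ^ n)
    have hrange : finrank K (LinearMap.range r) ≤ finrank K (LinearMap.ker (g ^ n)) :=
      Submodule.finrank_le _
    have hkerr : finrank K (LinearMap.ker r) = finrank K (LinearMap.ker g) := by
      rw [hker]; exact (Submodule.comapSubtypeEquivOfLe hle).finrank_eq
    have := r.finrank_range_add_finrank_ker
    rw [add_mul, one_mul]
    omega

section UniformProbability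

variable {α Ω : Type*} [Fintype Ω]

theorem natCard_exists_div_le_sum [Fintype α] (q : α → Prop) [DecidablePred q]
    (P : α → Ω → Prop) :
    (Nat.card {ω // ∃ a, q a ∧ P a ω} : ℝ) / Nat.card Ω ≤
      ∑ a with q a, (Nat.card {ω // P a ω} : ℝ) / Nat.card Ω := by
  classical
  rw [← sum_div]
  refine div_le_div_of_nonneg_right ?_ (Nat.cast_nonneg _)
  simp only [Nat.card_eq_fintype_card, Fintype.card_subtype]
  have hsub : ({ω | ∃ a, q a ∧ P a ω} : Finset Ω) ⊆ ({a | q a} : Finset α).biUnion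
      fun a => {ω | P a ω} := by
    intro ω hω
    obtain ⟨a, hqa, hPa⟩ := (mem_filter.mp hω).2
    simp only [mem_biUnion, mem_filter, mem_univ, true_and]
    exact ⟨a, hqa, hPa⟩
  exact_mod_cast (card_le_card hsub).trans card_biUnion_le

theorem exists_not_of_natCard_div_lt_one [Nonempty Ω] {P : Ω → Prop}
    (h : (Nat.card {ω // P ω} : ℝ) / Nat.card Ω < 1) : ∃ ω, ¬ P ω := by
  by_contra! hall
  rw [Nat.card_congr (Equiv.subtypeUnivEquiv hall),
    div_self (Nat.cast_ne_zero.mpr Nat.card_pos.ne')] at h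
  exact lt_irrefl 1 h

end UniformProbability

namespace CyclicShift

variable (p : ℕ)

noncomputable abbrev shift : End (ZMod p) (ZMod p → ZMod p) :=
  LinearMap.funLeft (ZMod p) (ZMod p) (· - 1)

theorem shift_pow_apply (k : ℕ) (f : ZMod p → ZMod p) :
    (shift p ^ k) f = fun x => f (x - k) := by
  induction k with
  | zero => simp
  | succ k ih =>
    funext x
    rw [pow_succ', Module.End.mul_apply, LinearMap.funLeft_apply, ih]
    push_cast
    ring_nf

theorem shift_pow_card : shift p ^ p = 1 := by
  ext f x
  simp [shift_pow_apply]

theorem eq_const_of_shift_eq [NeZero p] {f : ZMod p → ZMod p} (hf : shift p f = f) :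
    f = fun _ => f 0 := by
  have hnat : ∀ n : ℕ, f n = f 0 := by
    intro n
    induction n with
    | zero => simp
    | succ n ih => simpa [ih] using (congrFun hf (n + 1)).symm
  funext x
  rw [← ZMod.natCast_zmod_val x, hnat]

def orbitSpan (f : ZMod p → ZMod p) : Submodule (ZMod p) (ZMod p → ZMod p) :=
  Submodule.span (ZMod p) (Set.range fun σ : ZMod p => fun x => f (x - σ))

theorem mem_orbitSpan_self (f : ZMod p → ZMod p) : f ∈ orbitSpan p f :=
  Submodule.subset_span ⟨0, by simp⟩

theorem shift_mem_orbitSpan {f v : ZMod p → ZMod p} (hv : v ∈ orbitSpan p f) :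
    shift p v ∈ orbitSpan p f := by
  have hle : (orbitSpan p f).map (shift p) ≤ orbitSpan p f := by
    rw [orbitSpan, ← Submodule.span_image]
    refine Submodule.span_mono ?_
    rintro _ ⟨_, ⟨σ, rfl⟩, rfl⟩
    exact ⟨σ + 1, by funext x; simp [sub_sub, add_comm]⟩
  exact hle ⟨v, hv, rfl⟩

variable [Fact p.Prime]

theorem rankTf_pos {f : ZMod p → ZMod p} (hf : f ≠ 0) : 0 < rankTf p f := by
  have : Nontrivial (orbitSpan p f) :=
    ⟨⟨f, mem_orbitSpan_self p f⟩, 0, fun h => hf (congrArg Subtype.val h)⟩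
  exact finrank_pos (R := ZMod p) (M := orbitSpan p f)

theorem rankTf_le (f : ZMod p → ZMod p) : rankTf p f ≤ p :=
  (Submodule.finrank_le _).trans_eq (by simp)

theorem shift_sub_one_pow_card : (shift p - 1) ^ p = 0 := by
  have : CharP (End (ZMod p) (ZMod p → ZMod p)) p := charP_of_injective_algebraMap' (ZMod p) p
  rw [sub_pow_char_of_commute p (Commute.one_right _), shift_pow_card, one_pow, sub_self]

theorem finrank_ker_shift_sub_one_le : finrank (ZMod p) (LinearMap.ker (shift p - 1)) ≤ 1 := by
  refine (Submodule.finrank_mono fun f hf => ?_).trans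
    ((finrank_span_le_card {fun _ => 1}).trans_eq (by simp))
  have hshift : shift p f = f := sub_eq_zero.mp hf
  rw [eq_const_of_shift_eq p hshift, Submodule.mem_span_singleton]
  exact ⟨f 0, by funext; simp⟩

theorem card_ker_shift_sub_one_pow_le (r : ℕ) :
    Nat.card (LinearMap.ker ((shift p - 1) ^ r)) ≤ p ^ r := by
  rw [natCard_eq_pow_finrank (K := ZMod p), Nat.card_zmod]
  refine Nat.pow_le_pow_right (Fact.out : p.Prime).pos ?_
  simpa using (shift p - 1).finrank_ker_pow_le r |>.trans
    (Nat.mul_le_mul_left r (finrank_ker_shift_sub_one_le p))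

theorem shift_sub_one_pow_rankTf_apply (f : ZMod p → ZMod p) :
    ((shift p - 1) ^ rankTf p f) f = 0 := by
  have hinv : ∀ v ∈ orbitSpan p f, (shift p - 1) v ∈ orbitSpan p f := fun v hv =>
    (orbitSpan p f).sub_mem (shift_mem_orbitSpan p hv) hv
  set N := (shift p - 1).restrict hinv
  have hNp : (⟨f, mem_orbitSpan_self p f⟩ : orbitSpan p f) ∈ LinearMap.ker (N ^ p) := by
    rw [LinearMap.mem_ker, Module.End.pow_restrict]
    exact Subtype.ext (by simp [shift_sub_one_pow_card])
  have hNr := Module.End.ker_pow_le_ker_pow_finrank N p hNp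
  rw [LinearMap.mem_ker, Module.End.pow_restrict] at hNr
  exact congrArg Subtype.val hNr

theorem card_rankTf_eq_le (r : ℕ) : #{f | rankTf p f = r} ≤ p ^ r := by
  calc #{f | rankTf p f = r}
      ≤ Nat.card (LinearMap.ker ((shift p - 1) ^ r)) := by
        rw [← Nat.card_eq_finsetCard]
        refine Nat.card_mono (Set.toFinite _) fun f hf => ?_
        simp only [coe_filter, mem_univ, true_and, Set.mem_ofPred_eq] at hf
        exact hf ▸ shift_sub_one_pow_rankTf_apply p f
    _ ≤ p ^ r := card_ker_shift_sub_one_pow_le p r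

theorem sum_nonzero_comp_rankTf_le (w : ℕ → ℝ) (hw : ∀ r, 0 ≤ w r) :
    ∑ f with f ≠ 0, w (rankTf p f) ≤ ∑ r ∈ Icc 1 p, (p : ℝ) ^ r * w r := by
  rw [← sum_fiberwise_of_maps_to (t := Icc 1 p) (g := rankTf p)
    fun f hf => mem_Icc.mpr ⟨rankTf_pos p (mem_filter.mp hf).2, rankTf_le p f⟩]
  refine sum_le_sum fun r _ => ?_
  rw [sum_congr rfl fun f hf => by rw [(mem_filter.mp hf).2], sum_const, nsmul_eq_mul]
  gcongr
  · exact hw r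
  · exact_mod_cast (card_le_card (filter_subset_filter _ (filter_subset _ _))).trans
      (card_rankTf_eq_le p r)

end CyclicShift

theorem dotFp_comm (p : ℕ) [NeZero p] (f g : ZMod p → ZMod p) : dotFp p f g = dotFp p g f := by
  simp only [dotFp, mul_comm]

def orbitMultiset (p s : ℕ) [NeZero p] (h : Fin s → ZMod p → ZMod p) :
    Multiset (ZMod p → ZMod p) :=
  (univ : Finset (Fin s × ZMod p)).val.map fun iσ => fun x => h iσ.1 (x - iσ.2)

theorem card_orbitMultiset (p s : ℕ) [NeZero p] (h : Fin s → ZMod p → ZMod p) :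
    (orbitMultiset p s h).card = s * p := by
  simp [orbitMultiset]

theorem sum_map_orbitMultiset {M : Type*} [AddCommMonoid M] (p s : ℕ) [NeZero p]
    (h : Fin s → ZMod p → ZMod p) (F : (ZMod p → ZMod p) → M) :
    ((orbitMultiset p s h).map F).sum = ∑ i, ∑ σ : ZMod p, F fun x => h i (x - σ) := by
  rw [orbitMultiset, Multiset.map_map, sum_map_val, Fintype.sum_prod_type]
  rfl

theorem balanced_union_of_orbits_exists_general (p s : ℕ) [Fact p.Prime] (hs : 0 < s)
    (δ : ℝ)
    (hfix : ∀ f : ZMod p → ZMod p, f ≠ 0 →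
      (Nat.card {h : Fin s → ZMod p → ZMod p //
          1 - δ < ‖∑ i : Fin s, ∑ σ : ZMod p,
              ep p (dotFp p (fun x => h i (x - σ)) f)‖ / (s * p)} : ℝ) /
          (Nat.card (Fin s → ZMod p → ZMod p) : ℝ) ≤
        8 * Real.exp (-(1 - 2 * δ) ^ 2 * (rankTf p f) * s / 4)) :
    ((Nat.card {h : Fin s → ZMod p → ZMod p //
        ∃ f : ZMod p → ZMod p, f ≠ 0 ∧
          1 - δ < ‖∑ i : Fin s, ∑ σ : ZMod p,
              ep p (dotFp p (fun x => h i (x - σ)) f)‖ / (s * p)} : ℝ) /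
        (Nat.card (Fin s → ZMod p → ZMod p) : ℝ) ≤
      8 * ∑ r ∈ Finset.Icc 1 p, (p : ℝ) ^ r * Real.exp (-(1 - 2 * δ) ^ 2 * r * s / 4)) ∧
    (8 * ∑ r ∈ Finset.Icc 1 p, (p : ℝ) ^ r * Real.exp (-(1 - 2 * δ) ^ 2 * r * s / 4) < 1 →
      ∃ h : Fin s → ZMod p → ZMod p,
        ∀ f : ZMod p → ZMod p, f ≠ 0 →
          ‖(((Finset.univ : Finset (Fin s × ZMod p)).val.map
                (fun iσ => fun x => h iσ.1 (x - iσ.2))).map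
              (fun g => ep p (dotFp p f g))).sum‖ ≤
            (1 - δ) * (((Finset.univ : Finset (Fin s × ZMod p)).val.map
                (fun iσ => fun x => h iσ.1 (x - iσ.2))).card : ℝ)) := by
  have hbound := (natCard_exists_div_le_sum (· ≠ 0) _).trans <|
    (sum_le_sum fun f hf => hfix f (mem_filter.mp hf).2).trans <|
    CyclicShift.sum_nonzero_comp_rankTf_le p (fun r => 8 * Real.exp (-(1 - 2 * δ) ^ 2 * r * s / 4))
      fun r => by positivity
  rw [← sum_congr rfl fun r _ => mul_left_comm _ _ _, ← mul_sum] at hbound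
  refine ⟨hbound, fun hlt => ?_⟩
  obtain ⟨h, hgood⟩ := exists_not_of_natCard_div_lt_one (hbound.trans_lt hlt)
  push Not at hgood
  refine ⟨h, fun f hf => ?_⟩
  change ‖((orbitMultiset p s h).map fun g => ep p (dotFp p f g)).sum‖ ≤
    (1 - δ) * ((orbitMultiset p s h).card : ℝ)
  rw [sum_map_orbitMultiset, card_orbitMultiset]
  simp_rw [dotFp_comm p f]
  push_cast
  have hsp : (0 : ℝ) < s * p := by have := (Fact.out : p.Prime).pos; positivity
  exact (div_le_iff₀ hsp).mp (hgood f hf)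

/-- Union bound and existence of `δ`-balanced unions of orbits: assuming the
Meshulam–Wigderson bound `Prob(B_δ(f)) ≤ 8·exp(−(1−2δ)²·rank(T_f)·s/4)` for every
nonzero `f`, the probability that some nonzero `f` is bad is at most
`8·∑_{r=1}^p p^r·exp(−(1−2δ)²rs/4)`; whenever this bound is `< 1` (e.g. for
`s = 4c·ln p/(1−2δ)²`, `c > 1`, `p` large) there exist `h₁,…,h_s` such that the
multiset `⋃ᵢ C_p·hᵢ` is `δ`-balanced. -/
theorem balanced_union_of_orbits_exists (p s : ℕ) [Fact p.Prime] (hs : 0 < s)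
    (δ : ℝ) (hδ0 : 0 < δ) (hδ : δ < 1 / 2)
    (hfix : ∀ f : ZMod p → ZMod p, f ≠ 0 →
      (Nat.card {h : Fin s → ZMod p → ZMod p //
          1 - δ < ‖∑ i : Fin s, ∑ σ : ZMod p,
              ep p (dotFp p (fun x => h i (x - σ)) f)‖ / (s * p)} : ℝ) /
          (Nat.card (Fin s → ZMod p → ZMod p) : ℝ) ≤
        8 * Real.exp (-(1 - 2 * δ) ^ 2 * (rankTf p f) * s / 4)) :
    ((Nat.card {h : Fin s → ZMod p → ZMod p //
        ∃ f : ZMod p → ZMod p, f ≠ 0 ∧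
          1 - δ < ‖∑ i : Fin s, ∑ σ : ZMod p,
              ep p (dotFp p (fun x => h i (x - σ)) f)‖ / (s * p)} : ℝ) /
        (Nat.card (Fin s → ZMod p → ZMod p) : ℝ) ≤
      8 * ∑ r ∈ Finset.Icc 1 p, (p : ℝ) ^ r * Real.exp (-(1 - 2 * δ) ^ 2 * r * s / 4)) ∧
    (8 * ∑ r ∈ Finset.Icc 1 p, (p : ℝ) ^ r * Real.exp (-(1 - 2 * δ) ^ 2 * r * s / 4) < 1 →
      ∃ h : Fin s → ZMod p → ZMod p,
        ∀ f : ZMod p → ZMod p, f ≠ 0 →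
          ‖(((Finset.univ : Finset (Fin s × ZMod p)).val.map
                (fun iσ => fun x => h iσ.1 (x - iσ.2))).map
              (fun g => ep p (dotFp p f g))).sum‖ ≤
            (1 - δ) * (((Finset.univ : Finset (Fin s × ZMod p)).val.map
                (fun iσ => fun x => h iσ.1 (x - iσ.2))).card : ℝ)) :=
  balanced_union_of_orbits_exists_general p s hs δ hfix
end
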